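/- arXiv:0911.0777 — 3 statements merged into one kernel-verified Lean document; each statement's English description precedes it below -/
import Mathlib

section
/- Let B_n be defined by B_1 = B_2 = 1 and B_n = sum_{k=1}^{n-1} B_k B_{n-k} for n ≥ 3. Then B_n / 5^n tends to 0 as n → ∞. -/
lemma catalan_le_four_pow (n : ℕ) : catalan n ≤ 4 ^ n := by
  have h1 : (n + 1) * catalan n = n.centralBinom :=
    succ_mul_catalan_eq_centralBinom n
  have h2 : n.centralBinom ≤ 4 ^ n := by
    have : (2 * n).choose n ≤ ∑ i ∈ Finset.range (2 * n + 1), (2 * n).choose i :=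
      Finset.single_le_sum (f := fun i => (2 * n).choose i) (fun i _ => Nat.zero_le _)
        (by simp [Nat.lt_succ_iff]; omega)
    rw [Nat.sum_range_choose] at this
    calc n.centralBinom = (2 * n).choose n := Nat.centralBinom_eq_two_mul_choose n
      _ ≤ 2 ^ (2 * n) := this
      _ = 4 ^ n := by rw [pow_mul]; norm_num
  calc catalan n ≤ (n + 1) * catalan n := Nat.le_mul_of_pos_left _ (by omega)
    _ ≤ 4 ^ n := h1 ▸ h2

lemma catalan_succ'' (m : ℕ) :
    catalan (m + 1) = ∑ i ∈ Finset.range (m + 1), catalan i * catalan (m - i) := by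
  rw [catalan_succ]
  rw [Finset.sum_range fun i => catalan i * catalan (m - i)]

/-- For the Catalan-type sequence B with B₁ = B₂ = 1 and
B_n = ∑_{k=1}^{n-1} B_k B_{n-k} for n ≥ 3, the ratio B_n / 5^n tends to 0. -/
theorem Bn_div_five_pow_tendsto_zero (B : ℕ → ℕ) (hB1 : B 1 = 1) (hB2 : B 2 = 1)
    (hBn : ∀ n ≥ 3, B n = ∑ k ∈ Finset.Ico 1 n, B k * B (n - k)) :
    Filter.Tendsto (fun n : ℕ => (B n : ℝ) / 5 ^ n) Filter.atTop (nhds 0) := by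
  have key : ∀ n, 1 ≤ n → B n = catalan (n - 1) := by
    intro n
    induction n using Nat.strong_induction_on with
    | _ n ih =>
      intro hn
      match n, hn with
      | 1, _ => simpa using hB1
      | 2, _ => rw [hB2]; simp [catalan_one]
      | (m + 3), _ =>
        rw [hBn (m + 3) (by omega)]
        have : ∀ k ∈ Finset.Ico 1 (m + 3), B k * B (m + 3 - k)
            = catalan (k - 1) * catalan (m + 2 - k) := by
          intro k hk
          simp only [Finset.mem_Ico] at hk
          rw [ih k (by omega) hk.1, ih (m + 3 - k) (by omega) (by omega)]
          have h : m + 3 - k - 1 = m + 2 - k := by omega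
          rw [h]
        rw [Finset.sum_congr rfl this]
        show _ = catalan (m + 2)
        rw [catalan_succ'' (m + 1)]
        rw [Finset.sum_Ico_eq_sum_range]
        apply Finset.sum_congr (by norm_num)
        intro i hi
        simp only [Finset.mem_range] at hi
        have h1 : 1 + i - 1 = i := by omega
        have h2 : m + 2 - (1 + i) = m + 1 - i := by omega
        rw [h1, h2]
  have bound : ∀ n, 1 ≤ n → (B n : ℝ) ≤ 4 ^ n := by
    intro n hn
    rw [key n hn]
    calc (catalan (n - 1) : ℝ) ≤ (4 : ℝ) ^ (n - 1) := by
          exact_mod_cast catalan_le_four_pow (n - 1)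
      _ ≤ 4 ^ n := by
          apply pow_le_pow_right₀ (by norm_num) (by omega)
  have h0 : Filter.Tendsto (fun n : ℕ => (4 / 5 : ℝ) ^ n) Filter.atTop (nhds 0) :=
    tendsto_pow_atTop_nhds_zero_of_lt_one (by norm_num) (by norm_num)
  apply squeeze_zero' (Filter.eventually_atTop.2 ⟨1, fun n _ => by positivity⟩)
    (Filter.eventually_atTop.2 ⟨1, fun n hn => ?_⟩) h0
  rw [div_pow, div_le_div_iff₀ (by positivity) (by positivity)]
  calc (B n : ℝ) * 5 ^ n ≤ 4 ^ n * 5 ^ n := by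
        exact mul_le_mul_of_nonneg_right (bound n hn) (by positivity)
    _ = _ := by ring
end

section
/- Let x : [0,1] → ℝ be a càdlàg function with x(0) = 0. Define for each k ≥ 1, L_k(x) = max over consecutive triples r = (i-1)/2^k, s = i/2^k, t = (i+1)/2^k (for valid i) of min(|x(s) - x(r)|, |x(t) - x(s)|). Then sup_{t ∈ D} |x(t)| ≤ 2 ∑_{k=1}^∞ L_k(x) + |x(1)|, where D is the set of dyadic rationals in [0,1]. -/
open Filter Set

/-- For a càdlàg x : [0,1] → ℝ with x(0) = 0, with
L_k(x) the maximum over consecutive dyadic triples at level k of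
min(|x(s)-x(r)|, |x(t)-x(s)|), every dyadic rational t ∈ [0,1] satisfies
|x(t)| ≤ 2 ∑_{k=1}^∞ L_k(x) + |x(1)| (sum taken in [0,∞]). -/
theorem dyadic_sup_bound (x : ℝ → ℝ) (hx0 : x 0 = 0)
    (hrc : ∀ t ∈ Set.Ico (0:ℝ) 1, ContinuousWithinAt x (Set.Ici t) t)
    (hll : ∀ t ∈ Set.Ioc (0:ℝ) 1, ∃ l : ℝ,
      Filter.Tendsto x (nhdsWithin t (Set.Iio t)) (nhds l))
    (L : ℕ → ℝ)
    (hL : ∀ k : ℕ, 1 ≤ k → L k =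
      ⨆ i ∈ Finset.Ico (1 : ℕ) (2 ^ k), min
        |x ((i : ℝ) / 2 ^ k) - x (((i : ℝ) - 1) / 2 ^ k)|
        |x (((i : ℝ) + 1) / 2 ^ k) - x ((i : ℝ) / 2 ^ k)|) :
    ∀ t : ℝ, (∃ k i : ℕ, i ≤ 2 ^ k ∧ t = (i : ℝ) / 2 ^ k) →
      ENNReal.ofReal |x t| ≤
        2 * ∑' k : ℕ, ENNReal.ofReal (L (k + 1)) + ENNReal.ofReal |x 1| := by
  -- the generic triple minimum at level k
  set g : ℕ → ℕ → ℝ := fun k i => min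
        |x ((i : ℝ) / 2 ^ k) - x (((i : ℝ) - 1) / 2 ^ k)|
        |x (((i : ℝ) + 1) / 2 ^ k) - x ((i : ℝ) / 2 ^ k)| with hgdef
  -- each triple minimum is bounded by L k
  have key : ∀ k : ℕ, 1 ≤ k → ∀ i : ℕ, i ∈ Finset.Ico 1 (2 ^ k) → g k i ≤ L k := by
    intro k hk i hi
    rw [hL k hk]
    have hbdd : BddAbove (Set.range fun j => ⨆ _ : j ∈ Finset.Ico 1 (2 ^ k), g k j) := by
      apply Set.Finite.bddAbove
      apply Set.Finite.subset
        (Set.Finite.insert 0 (((Finset.Ico 1 (2 ^ k)).finite_toSet.image (g k))))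
      rintro _ ⟨j, rfl⟩
      show (⨆ _ : j ∈ Finset.Ico 1 (2 ^ k), g k j) ∈ _
      by_cases hj : j ∈ Finset.Ico 1 (2 ^ k)
      · rw [ciSup_pos (f := fun _ => g k j) hj]
        exact Or.inr ⟨j, hj, rfl⟩
      · rw [ciSup_neg (f := fun _ => g k j) hj, Real.sSup_empty]
        exact Or.inl rfl
    calc g k i = ⨆ _ : i ∈ Finset.Ico 1 (2 ^ k), g k i := (ciSup_pos (f := fun _ => g k i) hi).symm
      _ ≤ ⨆ j, ⨆ _ : j ∈ Finset.Ico 1 (2 ^ k), g k j := le_ciSup hbdd i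
  -- L (j+1) is nonnegative
  have hS0 : ∀ j : ℕ, 0 ≤ L (j + 1) := by
    intro j
    have h1 : (1 : ℕ) ∈ Finset.Ico 1 (2 ^ (j + 1)) := by
      simp [Nat.one_lt_two_pow_iff]
    have hkey := key (j + 1) (by omega) 1 h1
    have h0 : (0 : ℝ) ≤ g (j + 1) 1 := le_min (abs_nonneg _) (abs_nonneg _)
    linarith
  -- main induction
  have main : ∀ k i : ℕ, i ≤ 2 ^ k →
      min |x ((i : ℝ) / 2 ^ k)| |x 1 - x ((i : ℝ) / 2 ^ k)| ≤
        ∑ j ∈ Finset.range k, L (j + 1) := by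
    intro k
    induction k with
    | zero =>
      intro i hi
      interval_cases i
      · have : ((0 : ℕ) : ℝ) / 2 ^ 0 = 0 := by norm_num
        rw [this, hx0]
        simpa using min_le_left (0 : ℝ) |x 1 - 0|
      · have : ((1 : ℕ) : ℝ) / 2 ^ 0 = 1 := by norm_num
        rw [this]
        simpa using min_le_right |x 1| (0 : ℝ)
    | succ k ih =>
      intro i hi
      have h2k : (2 : ℕ) ^ (k + 1) = 2 * 2 ^ k := by ring
      rcases Nat.even_or_odd i with ⟨j, hj⟩ | ⟨j, hj⟩
      · -- even case: i = j + j
        subst hj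
        have hj2 : j ≤ 2 ^ k := by omega
        have hcast : ((j + j : ℕ) : ℝ) / 2 ^ (k + 1) = (j : ℝ) / 2 ^ k := by
          have h2 : (2 : ℝ) ^ k ≠ 0 := by positivity
          push_cast
          rw [pow_succ]
          field_simp
          ring
        rw [hcast]
        calc min |x ((j : ℝ) / 2 ^ k)| |x 1 - x ((j : ℝ) / 2 ^ k)|
            ≤ ∑ j ∈ Finset.range k, L (j + 1) := ih j hj2
          _ ≤ _ := by
            rw [Finset.sum_range_succ]
            linarith [hS0 k]
      · -- odd case: i = 2j+1
        subst hj
        have hjk : j ≤ 2 ^ k := by omega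
        have hj1 : j + 1 ≤ 2 ^ k := by omega
        have hmem : 2 * j + 1 ∈ Finset.Ico 1 (2 ^ (k + 1)) := by
          simp only [Finset.mem_Ico]
          omega
        have hkey := key (k + 1) (by omega) (2 * j + 1) hmem
        have h2 : (2 : ℝ) ^ k ≠ 0 := by positivity
        have hc1 : (((2 * j + 1 : ℕ) : ℝ) - 1) / 2 ^ (k + 1) = (j : ℝ) / 2 ^ k := by
          push_cast
          rw [pow_succ]
          field_simp
          ring
        have hc2 : (((2 * j + 1 : ℕ) : ℝ) + 1) / 2 ^ (k + 1) = ((j : ℝ) + 1) / 2 ^ k := by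
          push_cast
          rw [pow_succ]
          field_simp
          ring
        have hkey' : min |x (((2 * j + 1 : ℕ) : ℝ) / 2 ^ (k + 1)) - x ((j : ℝ) / 2 ^ k)|
            |x (((j : ℝ) + 1) / 2 ^ k) - x (((2 * j + 1 : ℕ) : ℝ) / 2 ^ (k + 1))|
              ≤ L (k + 1) := by
          rw [hgdef] at hkey
          simp only [← hc1, ← hc2]
          exact hkey
        set a := x ((j : ℝ) / 2 ^ k) with ha
        set b := x (((2 * j + 1 : ℕ) : ℝ) / 2 ^ (k + 1)) with hb
        set c := x (((j : ℝ) + 1) / 2 ^ k) with hc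
        have ihj := ih j hjk
        have ihj1 := ih (j + 1) hj1
        push_cast at ihj1
        rw [Finset.sum_range_succ]
        rcases min_le_iff.mp hkey' with hba | hcb
        · rcases min_le_iff.mp ihj with h1 | h2'
          · refine le_trans (min_le_left _ _) ?_
            have t1 : |b| ≤ |a| + |b - a| := by
              have := abs_add_le a (b - a)
              simpa using this
            linarith
          · refine le_trans (min_le_right _ _) ?_
            have t1 : |x 1 - b| ≤ |x 1 - a| + |b - a| := by
              have h := abs_sub_le (x 1) a b
              rw [abs_sub_comm a b] at h
              linarith
            linarith
        · rcases min_le_iff.mp ihj1 with h1 | h2'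
          · refine le_trans (min_le_left _ _) ?_
            have t1 : |b| ≤ |c| + |c - b| := by
              have h := abs_add_le c (b - c)
              rw [abs_sub_comm b c] at h
              simpa using h
            linarith
          · refine le_trans (min_le_right _ _) ?_
            have t1 : |x 1 - b| ≤ |x 1 - c| + |c - b| := abs_sub_le (x 1) c b
            linarith
  -- conclude
  rintro t ⟨k, i, hi, rfl⟩
  have hmin := main k i hi
  have habs : |x ((i : ℝ) / 2 ^ k)| ≤ (∑ j ∈ Finset.range k, L (j + 1)) + |x 1| := by
    rcases min_le_iff.mp hmin with h | h
    · have := abs_nonneg (x 1); linarith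
    · have t1 : |x ((i : ℝ) / 2 ^ k)| ≤ |x 1| + |x 1 - x ((i : ℝ) / 2 ^ k)| := by
        have hh := abs_add_le (x 1) (x ((i : ℝ) / 2 ^ k) - x 1)
        rw [abs_sub_comm (x ((i : ℝ) / 2 ^ k)) (x 1)] at hh
        simpa using hh
      linarith
  calc ENNReal.ofReal |x ((i : ℝ) / 2 ^ k)|
      ≤ ENNReal.ofReal ((∑ j ∈ Finset.range k, L (j + 1)) + |x 1|) :=
        ENNReal.ofReal_le_ofReal habs
    _ ≤ ENNReal.ofReal (∑ j ∈ Finset.range k, L (j + 1)) + ENNReal.ofReal |x 1| :=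
        ENNReal.ofReal_add_le
    _ = (∑ j ∈ Finset.range k, ENNReal.ofReal (L (j + 1))) + ENNReal.ofReal |x 1| := by
        rw [ENNReal.ofReal_sum_of_nonneg (fun j _ => hS0 j)]
    _ ≤ (∑' j : ℕ, ENNReal.ofReal (L (j + 1))) + ENNReal.ofReal |x 1| := by
        exact add_le_add (ENNReal.sum_le_tsum _) le_rfl
    _ ≤ 2 * (∑' j : ℕ, ENNReal.ofReal (L (j + 1))) + ENNReal.ofReal |x 1| := by
        exact add_le_add (le_mul_of_one_le_left zero_le one_le_two) le_rfl
end

section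
/- Let c > 0. For θ = (θ₁,…,θ_n) ∈ ℝⁿ let χ_θ(s) = ∑_{i=1}^n (θ_i + … + θ_n) 1_{[(i-1)/n, i/n)}(s) and Λ(θ) = c ∫₀¹ χ_θ(1-s)² ds. Then for f = (f₁,…,f_n) ∈ ℝⁿ, the Legendre transform Λ*(f) = sup_{θ∈ℝⁿ} (⟨f,θ⟩ - Λ(θ)) equals (n/(4c)) ∑_{i=1}^n (f_i - f_{i-1})², with f_0 := 0. -/
open MeasureTheory

section Aux

variable {n : ℕ}

private lemma aux_disjoint (hn : 1 ≤ n) {i j : ℕ} (hij : i ≠ j) {s : ℝ}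
    (hi : s ∈ Set.Ico (((i : ℝ) - 1) / n) ((i : ℝ) / n)) :
    s ∉ Set.Ico (((j : ℝ) - 1) / n) ((j : ℝ) / n) := by
  have hn' : (0:ℝ) < n := by exact_mod_cast Nat.pos_of_ne_zero (by omega)
  intro hj
  rcases lt_or_gt_of_ne hij with h | h
  · have : (i : ℝ) ≤ (j : ℝ) - 1 := by
      have : (i : ℝ) + 1 ≤ j := by exact_mod_cast h
      linarith
    have := hi.2.trans_le ((div_le_div_iff_of_pos_right hn').2 this)
    exact absurd hj.1 (not_le.2 this)
  · have : (j : ℝ) ≤ (i : ℝ) - 1 := by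
      have : (j : ℝ) + 1 ≤ i := by exact_mod_cast h
      linarith
    have := hj.2.trans_le ((div_le_div_iff_of_pos_right hn').2 this)
    exact absurd hi.1 (not_le.2 this)

/-- pointwise collapse of the square of a sum of indicators over disjoint sets -/
private lemma aux_sq_sum (hn : 1 ≤ n) (a : ℕ → ℝ) (s : ℝ) :
    (∑ i ∈ Finset.Icc 1 n, a i *
        Set.indicator (Set.Ico (((i : ℝ) - 1) / n) ((i : ℝ) / n)) (fun _ => (1:ℝ)) s) ^ 2 =
      ∑ i ∈ Finset.Icc 1 n, (a i) ^ 2 *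
        Set.indicator (Set.Ico (((i : ℝ) - 1) / n) ((i : ℝ) / n)) (fun _ => (1:ℝ)) s := by
  by_cases h : ∃ k ∈ Finset.Icc 1 n, s ∈ Set.Ico (((k : ℝ) - 1) / n) ((k : ℝ) / n)
  · obtain ⟨k, hk, hks⟩ := h
    rw [Finset.sum_eq_single_of_mem k hk, Finset.sum_eq_single_of_mem k hk]
    · rw [Set.indicator_of_mem hks]; ring
    · intro j _ hj
      rw [Set.indicator_of_notMem (aux_disjoint hn (fun he => hj he.symm) hks), mul_zero]
    · intro j _ hj
      rw [Set.indicator_of_notMem (aux_disjoint hn (fun he => hj he.symm) hks), mul_zero]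
  · push_neg at h
    rw [Finset.sum_eq_zero, Finset.sum_eq_zero]
    · simp
    · intro j hj; rw [Set.indicator_of_notMem (h j hj), mul_zero]
    · intro j hj; rw [Set.indicator_of_notMem (h j hj), mul_zero]

private lemma aux_ind_int (hn : 1 ≤ n) {i : ℕ} (hi : i ∈ Finset.Icc 1 n) :
    ∫ s in (0:ℝ)..1,
        Set.indicator (Set.Ico (((i : ℝ) - 1) / n) ((i : ℝ) / n)) (fun _ => (1:ℝ)) s
      = 1 / n := by
  have hn' : (0:ℝ) < n := by exact_mod_cast Nat.pos_of_ne_zero (by omega)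
  obtain ⟨hi1, hi2⟩ := Finset.mem_Icc.mp hi
  have hi1' : (1:ℝ) ≤ i := by exact_mod_cast hi1
  have hi2' : (i:ℝ) ≤ n := by exact_mod_cast hi2
  set a : ℝ := ((i : ℝ) - 1) / n with ha
  set b : ℝ := (i : ℝ) / n with hb
  have ha0 : 0 ≤ a := div_nonneg (by linarith) hn'.le
  have hb1 : b ≤ 1 := (div_le_one hn').2 hi2'
  have hab : a ≤ b := (div_le_div_iff_of_pos_right hn').2 (by linarith)
  have hvol : volume (Set.Ioc (0:ℝ) 1 ∩ Set.Ico a b) = ENNReal.ofReal (b - a) := by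
    apply le_antisymm
    · calc volume (Set.Ioc (0:ℝ) 1 ∩ Set.Ico a b) ≤ volume (Set.Icc a b) :=
            measure_mono (Set.inter_subset_right.trans Set.Ico_subset_Icc_self)
        _ = ENNReal.ofReal (b - a) := Real.volume_Icc
    · calc ENNReal.ofReal (b - a) = volume (Set.Ioo a b) := Real.volume_Ioo.symm
        _ ≤ volume (Set.Ioc (0:ℝ) 1 ∩ Set.Ico a b) := by
            apply measure_mono
            intro x hx
            exact ⟨⟨lt_of_le_of_lt ha0 hx.1, (hx.2.le.trans hb1)⟩, ⟨hx.1.le, hx.2⟩⟩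
  rw [intervalIntegral.integral_of_le zero_le_one,
    MeasureTheory.setIntegral_indicator measurableSet_Ico]
  rw [MeasureTheory.setIntegral_const, measureReal_def, hvol, smul_eq_mul, mul_one,
    ENNReal.toReal_ofReal (by linarith)]
  rw [hb, ha]
  field_simp
  ring

private lemma aux_ind_intble (hn : 1 ≤ n) (r : ℝ) (i : ℕ) :
    IntervalIntegrable (fun s => r *
      Set.indicator (Set.Ico (((i : ℝ) - 1) / n) ((i : ℝ) / n)) (fun _ => (1:ℝ)) s)
      volume 0 1 := by
  apply IntervalIntegrable.const_mul
  rw [intervalIntegrable_iff_integrableOn_Ioc_of_le zero_le_one]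
  apply MeasureTheory.IntegrableOn.integrable
  rw [MeasureTheory.IntegrableOn, MeasureTheory.integrable_indicator_iff measurableSet_Ico]
  exact integrableOn_const (ne_of_lt (by
    rw [Measure.restrict_apply measurableSet_Ico]
    exact lt_of_le_of_lt (measure_mono Set.inter_subset_right) (by simp)))

/-- the integral computation -/
private lemma aux_integral (hn : 1 ≤ n) (a : ℕ → ℝ) :
    (∫ s in (0:ℝ)..1,
      (∑ i ∈ Finset.Icc 1 n, a i *
        Set.indicator (Set.Ico (((i : ℝ) - 1) / n) ((i : ℝ) / n))
          (fun _ => (1:ℝ)) (1 - s)) ^ 2) =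
      (1 / n) * ∑ i ∈ Finset.Icc 1 n, (a i) ^ 2 := by
  have h1 : (∫ s in (0:ℝ)..1,
      (∑ i ∈ Finset.Icc 1 n, a i *
        Set.indicator (Set.Ico (((i : ℝ) - 1) / n) ((i : ℝ) / n))
          (fun _ => (1:ℝ)) (1 - s)) ^ 2) =
      ∫ s in (0:ℝ)..1,
      (∑ i ∈ Finset.Icc 1 n, a i *
        Set.indicator (Set.Ico (((i : ℝ) - 1) / n) ((i : ℝ) / n))
          (fun _ => (1:ℝ)) s) ^ 2 := by
    have := intervalIntegral.integral_comp_sub_left (a := (0:ℝ)) (b := 1)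
      (fun s => (∑ i ∈ Finset.Icc 1 n, a i *
        Set.indicator (Set.Ico (((i : ℝ) - 1) / n) ((i : ℝ) / n))
          (fun _ => (1:ℝ)) s) ^ 2) 1
    simpa using this
  rw [h1]
  have h2 : ∀ s : ℝ, (∑ i ∈ Finset.Icc 1 n, a i *
        Set.indicator (Set.Ico (((i : ℝ) - 1) / n) ((i : ℝ) / n))
          (fun _ => (1:ℝ)) s) ^ 2 =
      ∑ i ∈ Finset.Icc 1 n, (a i) ^ 2 *
        Set.indicator (Set.Ico (((i : ℝ) - 1) / n) ((i : ℝ) / n))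
          (fun _ => (1:ℝ)) s := fun s => aux_sq_sum hn a s
  simp_rw [h2]
  rw [intervalIntegral.integral_finset_sum (fun i _ => aux_ind_intble hn ((a i)^2) i)]
  rw [Finset.mul_sum]
  apply Finset.sum_congr rfl
  intro i hi
  rw [intervalIntegral.integral_const_mul, aux_ind_int hn hi]
  ring

private lemma aux_tele1 (f : ℕ → ℝ) (j : ℕ) :
    ∑ i ∈ Finset.Icc 1 j, (f i - f (i - 1)) = f j - f 0 := by
  induction j with
  | zero => simp
  | succ j ih =>
      rw [Finset.sum_Icc_succ_top (by omega), ih]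
      simp only [Nat.add_sub_cancel]
      ring

/-- Abel summation -/
private lemma aux_abel (f θ : ℕ → ℝ) (hf0 : f 0 = 0) :
    ∑ i ∈ Finset.Icc 1 n, f i * θ i =
      ∑ i ∈ Finset.Icc 1 n, (f i - f (i - 1)) * ∑ j ∈ Finset.Icc i n, θ j := by
  have : ∑ i ∈ Finset.Icc 1 n, (f i - f (i - 1)) * ∑ j ∈ Finset.Icc i n, θ j =
      ∑ i ∈ Finset.Icc 1 n, ∑ j ∈ Finset.Icc i n, (f i - f (i - 1)) * θ j := by
    simp_rw [Finset.mul_sum]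
  rw [this, Finset.sum_comm' (t' := Finset.Icc 1 n) (s' := fun j => Finset.Icc 1 j)
    (by intro x y; simp only [Finset.mem_Icc]; omega)]
  apply Finset.sum_congr rfl
  intro j _
  rw [← Finset.sum_mul, aux_tele1, hf0, sub_zero]

private lemma aux_tele2 (g : ℕ → ℝ) (i : ℕ) :
    ∀ m : ℕ, i ≤ m + 1 → ∑ j ∈ Finset.Icc i m, (g j - g (j + 1)) = g i - g (m + 1) := by
  intro m
  induction m with
  | zero =>
      intro hi
      interval_cases i
      · simp
      · simp
  | succ m ih =>
      intro hi
      rcases Nat.lt_or_ge i (m + 2) with h | h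
      · have h' : i ≤ m + 1 := by omega
        rw [Finset.sum_Icc_succ_top h', ih h']
        ring
      · have : i = m + 2 := by omega
        subst this
        rw [Finset.Icc_eq_empty (by omega), Finset.sum_empty]
        ring

end Aux

/-- Finite-dimensional Legendre transform computation: with
χ_θ(s) = ∑_{i=1}^n (θ_i + … + θ_n) 1_{[(i-1)/n, i/n)}(s) and
Λ(θ) = c ∫₀¹ χ_θ(1-s)² ds, the Legendre transform of Λ at f (with f₀ = 0) is
Λ*(f) = (n/(4c)) ∑_{i=1}^n (f_i - f_{i-1})². -/
theorem finite_dim_legendre (c : ℝ) (hc : 0 < c) (n : ℕ) (hn : 1 ≤ n)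
    (f : ℕ → ℝ) (hf0 : f 0 = 0) :
    (⨆ θ : ℕ → ℝ,
      ((∑ i ∈ Finset.Icc 1 n, f i * θ i) -
        c * ∫ s in (0:ℝ)..1,
          (∑ i ∈ Finset.Icc 1 n, (∑ j ∈ Finset.Icc i n, θ j) *
            Set.indicator (Set.Ico (((i : ℝ) - 1) / n) ((i : ℝ) / n))
              (fun _ => (1 : ℝ)) (1 - s)) ^ 2)) =
      (n : ℝ) / (4 * c) * ∑ i ∈ Finset.Icc 1 n, (f i - f (i - 1)) ^ 2 := by
  have hn' : (0:ℝ) < n := by exact_mod_cast Nat.pos_of_ne_zero (by omega)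
  set F : (ℕ → ℝ) → ℝ := fun θ =>
      ((∑ i ∈ Finset.Icc 1 n, f i * θ i) -
        c * ∫ s in (0:ℝ)..1,
          (∑ i ∈ Finset.Icc 1 n, (∑ j ∈ Finset.Icc i n, θ j) *
            Set.indicator (Set.Ico (((i : ℝ) - 1) / n) ((i : ℝ) / n))
              (fun _ => (1 : ℝ)) (1 - s)) ^ 2) with hF
  have key : ∀ θ : ℕ → ℝ, F θ = ∑ i ∈ Finset.Icc 1 n,
      ((f i - f (i - 1)) * (∑ j ∈ Finset.Icc i n, θ j)
        - c / n * (∑ j ∈ Finset.Icc i n, θ j) ^ 2) := by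
    intro θ
    rw [hF]
    simp only
    rw [aux_integral hn (fun i => ∑ j ∈ Finset.Icc i n, θ j), aux_abel f θ hf0,
      Finset.sum_sub_distrib, Finset.mul_sum, Finset.mul_sum]
    congr 1
    apply Finset.sum_congr rfl
    intro i _
    field_simp
  -- upper bound
  have hub : ∀ θ : ℕ → ℝ, F θ ≤
      (n : ℝ) / (4 * c) * ∑ i ∈ Finset.Icc 1 n, (f i - f (i - 1)) ^ 2 := by
    intro θ
    rw [key θ, Finset.mul_sum]
    apply Finset.sum_le_sum
    intro i _
    set b := f i - f (i - 1)
    set x := ∑ j ∈ Finset.Icc i n, θ j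
    have h : (n:ℝ) / (4 * c) * b ^ 2 - (b * x - c / n * x ^ 2)
        = ((n:ℝ) * b - 2 * c * x) ^ 2 / (4 * c * n) := by
      field_simp
      ring
    have h2 : (0:ℝ) ≤ ((n:ℝ) * b - 2 * c * x) ^ 2 / (4 * c * n) :=
      div_nonneg (sq_nonneg _) (by positivity)
    linarith
  -- optimizer
  set g : ℕ → ℝ := fun j => if j ≤ n ∧ 1 ≤ j then f j - f (j - 1) else 0 with hg
  set θs : ℕ → ℝ := fun j => (n : ℝ) / (2 * c) * (g j - g (j + 1)) with hθs
  have hS : ∀ i ∈ Finset.Icc 1 n, ∑ j ∈ Finset.Icc i n, θs j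
      = (n : ℝ) / (2 * c) * (f i - f (i - 1)) := by
    intro i hi
    obtain ⟨hi1, hi2⟩ := Finset.mem_Icc.mp hi
    have : ∑ j ∈ Finset.Icc i n, θs j
        = (n : ℝ) / (2 * c) * ∑ j ∈ Finset.Icc i n, (g j - g (j + 1)) := by
      rw [Finset.mul_sum]
    rw [this, aux_tele2 g i n (by omega)]
    have h1 : g i = f i - f (i - 1) := by simp [hg, hi1, hi2]
    have h2 : g (n + 1) = 0 := by simp [hg]
    rw [h1, h2, sub_zero]
  have heq : F θs = (n : ℝ) / (4 * c) * ∑ i ∈ Finset.Icc 1 n, (f i - f (i - 1)) ^ 2 := by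
    rw [key θs, Finset.mul_sum]
    apply Finset.sum_congr rfl
    intro i hi
    rw [hS i hi]
    field_simp
    ring
  apply le_antisymm
  · exact ciSup_le hub
  · rw [← heq]
    exact le_ciSup ⟨(n : ℝ) / (4 * c) * ∑ i ∈ Finset.Icc 1 n, (f i - f (i - 1)) ^ 2,
      Set.forall_mem_range.2 hub⟩ θs
end
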